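/- In ℂ⁶ with basis e₀,…,e₅, let ω₀ = e₀∧e₂ + e₁∧e₃, ω₁ = e₀∧e₄ + e₁∧e₅, ω₂ = e₀∧e₁ + e₂∧e₅ + e₃∧e₄, and ω = −z·e₀∧e₁ − c·(e₂∧e₅ − e₃∧e₄) with z,c ∈ ℂ nonzero. Then the Pfaffian cubic Pf(tω + x₀ω₀ + x₁ω₁ + x₂ω₂) equals (up to a nonzero constant) zc²t³ − c²t²x₂ − ztx₂² − 2ctx₀x₁ + x₂³. -/

import Mathlib

open ExteriorAlgebra

noncomputable section

abbrev V6 := Fin 6 → ℂ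

/-- standard basis vectors of ℂ⁶ -/
def e (i : Fin 6) : V6 := Pi.single i 1

/-- image of basis vectors in the exterior algebra -/
def ev (i : Fin 6) : ExteriorAlgebra ℂ V6 := ExteriorAlgebra.ι ℂ (e i)

/-- the volume element e₀∧e₁∧e₂∧e₃∧e₄∧e₅ -/
def vol : ExteriorAlgebra ℂ V6 := ev 0 * ev 1 * ev 2 * ev 3 * ev 4 * ev 5

/-!
In the basis `eᵢ ∧ eⱼ`, the form `tω + x₀ω₀ + x₁ω₁ + x₂ω₂` has coefficient `x₂ - tz` on `e₀₁`,
`x₀` on `e₀₂, e₁₃`, `x₁` on `e₀₄, e₁₅` and `x₂ ∓ tc` on `e₂₅, e₃₄`. The cube of a 2-form on `ℂ⁶` is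
`6 · Pf · vol`, and for this support the Pfaffian is `(x₂ - tz)(x₂² - t²c²) - 2tc x₀x₁`, so `k = 6`.
-/

lemma ev_mul_self (i : Fin 6) : ev i * ev i = 0 :=
  ι_sq_zero (e i)

lemma ev_mul_ev_mul_self (i : Fin 6) (x : ExteriorAlgebra ℂ V6) : ev i * (ev i * x) = 0 := by
  rw [← mul_assoc, ev_mul_self, zero_mul]

lemma ev_mul_comm_of_lt {i j : Fin 6} (_ : j < i) : ev i * ev j = -(ev j * ev i) :=
  eq_neg_of_add_eq_zero_left (ι_add_mul_swap (e i) (e j))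

lemma ev_mul_ev_mul_comm_of_lt {i j : Fin 6} (h : j < i) (x : ExteriorAlgebra ℂ V6) :
    ev i * (ev j * x) = -(ev j * (ev i * x)) := by
  rw [← mul_assoc, ev_mul_comm_of_lt h, neg_mul, mul_assoc]

/-- Only three perfect matchings of `{0,…,5}` use the edges `01, 02, 04, 13, 15, 25, 34`, namely
`{01,25,34}`, `{02,15,34}` and `{04,13,25}`; these are the three terms of the Pfaffian. -/
lemma cube_eq_pfaffian_smul_vol (a₀₁ a₀₂ a₀₄ a₁₃ a₁₅ a₂₅ a₃₄ : ℂ) :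
    (a₀₁ • (ev 0 * ev 1) + a₀₂ • (ev 0 * ev 2) + a₀₄ • (ev 0 * ev 4) + a₁₃ • (ev 1 * ev 3)
        + a₁₅ • (ev 1 * ev 5) + a₂₅ • (ev 2 * ev 5) + a₃₄ • (ev 3 * ev 4)) ^ 3
      = (6 * (a₀₁ * a₂₅ * a₃₄ - a₀₂ * a₁₅ * a₃₄ + a₀₄ * a₁₃ * a₂₅)) • vol := by
  simp only [pow_succ, pow_zero, one_mul, vol, add_mul, mul_add, smul_mul_assoc, mul_smul_comm]
  simp +decide only [mul_assoc, ev_mul_comm_of_lt, ev_mul_ev_mul_comm_of_lt, ev_mul_self,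
    ev_mul_ev_mul_self, neg_mul, mul_neg, neg_neg, mul_zero, zero_mul, smul_zero, neg_zero,
    smul_neg, add_zero, zero_add]
  module

/-- For ω₀ = e₀∧e₂ + e₁∧e₃, ω₁ = e₀∧e₄ + e₁∧e₅, ω₂ = e₀∧e₁ + e₂∧e₅ + e₃∧e₄ and
ω = −z·e₀∧e₁ − c·(e₂∧e₅ − e₃∧e₄) with z, c nonzero, the Pfaffian cubic of
tω + x₀ω₀ + x₁ω₁ + x₂ω₂ equals, up to a fixed nonzero constant,
zc²t³ − c²t²x₂ − ztx₂² − 2ctx₀x₁ + x₂³. -/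
theorem example_one_pfaffian
    (ω₀ ω₁ ω₂ : ExteriorAlgebra ℂ V6)
    (h₀ : ω₀ = ev 0 * ev 2 + ev 1 * ev 3)
    (h₁ : ω₁ = ev 0 * ev 4 + ev 1 * ev 5)
    (h₂ : ω₂ = ev 0 * ev 1 + ev 2 * ev 5 + ev 3 * ev 4) :
    ∃ k : ℂ, k ≠ 0 ∧ ∀ z c : ℂ, z ≠ 0 → c ≠ 0 →
      ∀ t x₀ x₁ x₂ : ℂ,
      (t • (-z • (ev 0 * ev 1) - c • (ev 2 * ev 5 - ev 3 * ev 4))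
        + x₀ • ω₀ + x₁ • ω₁ + x₂ • ω₂) *
      (t • (-z • (ev 0 * ev 1) - c • (ev 2 * ev 5 - ev 3 * ev 4))
        + x₀ • ω₀ + x₁ • ω₁ + x₂ • ω₂) *
      (t • (-z • (ev 0 * ev 1) - c • (ev 2 * ev 5 - ev 3 * ev 4))
        + x₀ • ω₀ + x₁ • ω₁ + x₂ • ω₂)
        = (k * (z * c^2 * t^3 - c^2 * t^2 * x₂ - z * t * x₂^2
            - 2 * c * t * x₀ * x₁ + x₂^3)) • vol := by
  refine ⟨6, by norm_num, fun z c _ _ t x₀ x₁ x₂ => ?_⟩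
  have coefficients : t • (-z • (ev 0 * ev 1) - c • (ev 2 * ev 5 - ev 3 * ev 4))
      + x₀ • ω₀ + x₁ • ω₁ + x₂ • ω₂
      = (x₂ - t * z) • (ev 0 * ev 1) + x₀ • (ev 0 * ev 2) + x₁ • (ev 0 * ev 4)
        + x₀ • (ev 1 * ev 3) + x₁ • (ev 1 * ev 5) + (x₂ - t * c) • (ev 2 * ev 5)
        + (x₂ + t * c) • (ev 3 * ev 4) := by
    subst h₀ h₁ h₂
    module
  rw [← pow_three', coefficients, cube_eq_pfaffian_smul_vol]
  congr 1
  ring
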